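/- Let A be the adjacency matrix of a finite simple graph on vertex set V and fix O ⊆ V. For every j ∈ O, the (j,j) diagonal entry of QᵀQ satisfies ∑_{I ⊊ O} 1{j∉I} vol(I,{j})² = 2^{|O|−3} · deg_O(j) · ( deg_O(j) + 1 ), where 2^{|O|−3} denotes the real power. -/

import Mathlib

open Finset

variable {V : Type*} [Fintype V] [DecidableEq V]

/-- The adjacency matrix of the graph, real-valued. -/
noncomputable def adjMat (G : SimpleGraph V) [DecidableRel G.Adj] (i j : V) : ℝ :=
  if G.Adj i j then 1 else 0

/-- `vol(I,J) = ∑_{i∈I} ∑_{j∈J} A_{ij}`. -/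
noncomputable def vol (G : SimpleGraph V) [DecidableRel G.Adj] (I J : Finset V) : ℝ :=
  ∑ i ∈ I, ∑ j ∈ J, adjMat G i j

/-- `deg_S(i) = ∑_{s∈S} A_{is}`. -/
noncomputable def degS (G : SimpleGraph V) [DecidableRel G.Adj] (S : Finset V) (i : V) : ℝ :=
  ∑ s ∈ S, adjMat G i s

/-- `vol²_S(i,j) = ∑_{r∈S} A_{ir} A_{rj}`, the number of paths of length 2 from `i` to `j`
through `S`. -/
noncomputable def vol2 (G : SimpleGraph V) [DecidableRel G.Adj] (S : Finset V) (i j : V) : ℝ :=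
  ∑ r ∈ S, adjMat G i r * adjMat G r j

/-! Only the sets `I ⊊ O` avoiding `j` contribute, and these are exactly the subsets of
`O.erase j`; on them `vol(I,{j}) = ∑_{i∈I} aᵢ` with `aᵢ = A_{ij} ∈ {0,1}`. Over the `2ⁿ` subsets of
an `n`-set each element lies in half and each pair of distinct elements in a quarter of them, so
`∑_I (∑_{i∈I} aᵢ)² = 2ⁿ⁻² ((∑ aᵢ)² + ∑ aᵢ²)`. Since `aᵢ² = aᵢ` and `A_{jj} = 0`, both sums equal
`deg_O(j)`, and `n = |O| - 1`. -/

section PowersetSums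

variable {α R : Type*} [DecidableEq α] [CommRing R]

theorem two_mul_sum_powerset_sum (S : Finset α) (a : α → R) :
    2 * ∑ I ∈ S.powerset, ∑ i ∈ I, a i = 2 ^ #S * ∑ i ∈ S, a i := by
  induction S using Finset.induction with
  | empty => simp
  | insert x S hx ih =>
    have hsum : ∀ I ∈ S.powerset, ∑ i ∈ insert x I, a i = a x + ∑ i ∈ I, a i := fun I hI =>
      sum_insert fun hxI => hx (mem_powerset.mp hI hxI)
    rw [sum_powerset_insert hx, sum_congr rfl hsum, sum_add_distrib, sum_const, card_powerset,
      nsmul_eq_mul, Nat.cast_pow, Nat.cast_ofNat, sum_insert hx, card_insert_of_notMem hx]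
    linear_combination 2 * ih

theorem four_mul_sum_powerset_sum_sq (S : Finset α) (a : α → R) :
    4 * ∑ I ∈ S.powerset, (∑ i ∈ I, a i) ^ 2 =
      2 ^ #S * ((∑ i ∈ S, a i) ^ 2 + ∑ i ∈ S, a i ^ 2) := by
  induction S using Finset.induction with
  | empty => simp
  | insert x S hx ih =>
    have hsum : ∀ I ∈ S.powerset, (∑ i ∈ insert x I, a i) ^ 2 =
        a x ^ 2 + 2 * a x * ∑ i ∈ I, a i + (∑ i ∈ I, a i) ^ 2 := fun I hI => by
      rw [sum_insert fun hxI => hx (mem_powerset.mp hI hxI)]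
      ring
    rw [sum_powerset_insert hx, sum_congr rfl hsum, sum_add_distrib, sum_add_distrib, sum_const,
      card_powerset, nsmul_eq_mul, Nat.cast_pow, Nat.cast_ofNat, ← mul_sum, sum_insert hx,
      sum_insert hx, card_insert_of_notMem hx]
    linear_combination 2 * ih + 4 * a x * two_mul_sum_powerset_sum S a

end PowersetSums

section Graph

variable {α : Type*} (G : SimpleGraph α) [DecidableRel G.Adj]

theorem adjMat_sq (i j : α) : adjMat G i j ^ 2 = adjMat G i j := by
  unfold adjMat; split_ifs <;> norm_num

theorem adjMat_comm (i j : α) : adjMat G i j = adjMat G j i := by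
  simp only [adjMat, G.adj_comm]

theorem vol_singleton_right (I : Finset α) (j : α) : vol G I {j} = ∑ i ∈ I, adjMat G i j := by
  simp only [vol, sum_singleton]

theorem sum_erase_adjMat_eq_degS [DecidableEq α] (O : Finset α) (j : α) :
    ∑ i ∈ O.erase j, adjMat G i j = degS G O j := by
  rw [sum_erase O (by simp [adjMat]), degS]
  exact sum_congr rfl fun i _ => adjMat_comm G i j

end Graph

theorem filter_notMem_filter_ssubset_powerset {α : Type*} [DecidableEq α] {O : Finset α} {j : α}
    (hj : j ∈ O) : {I ∈ {I ∈ O.powerset | I ⊂ O} | j ∉ I} = (O.erase j).powerset := by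
  ext I
  simp only [mem_filter, mem_powerset, subset_erase, ssubset_iff_subset_ne]
  constructor
  · rintro ⟨⟨hIO, -⟩, hjI⟩
    exact ⟨hIO, hjI⟩
  · rintro ⟨hIO, hjI⟩
    exact ⟨⟨hIO, hIO, by rintro rfl; exact hjI hj⟩, hjI⟩

theorem two_pow_sub_one_eq_four_mul_zpow {n : ℕ} (hn : 1 ≤ n) :
    (2 : ℝ) ^ (n - 1) = 4 * 2 ^ ((n : ℤ) - 3) := by
  rw [← zpow_natCast, Nat.cast_sub hn, show (4 : ℝ) = 2 ^ (2 : ℤ) by norm_num,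
    ← zpow_add₀ two_ne_zero]
  ring_nf

/-- Diagonal entries of `QᵀQ`:
`∑_{I ⊊ O} 1{j∉I} vol(I,{j})² = 2^{|O|−3} deg_O(j) (deg_O(j) + 1)`. -/
theorem QtQ_diag (G : SimpleGraph V) [DecidableRel G.Adj] (O : Finset V)
    (j : V) (hj : j ∈ O) :
    ∑ I ∈ O.powerset.filter (fun I => I ⊂ O),
        (if j ∉ I then (1 : ℝ) else 0) * vol G I {j} ^ 2 =
      (2 : ℝ) ^ ((O.card : ℤ) - 3) * (degS G O j * (degS G O j + 1)) := by
  have key := four_mul_sum_powerset_sum_sq (O.erase j) (fun i => adjMat G i j)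
  simp only [adjMat_sq, sum_erase_adjMat_eq_degS, card_erase_of_mem hj,
    two_pow_sub_one_eq_four_mul_zpow (card_pos.mpr ⟨j, hj⟩)] at key
  simp only [boole_mul, ← sum_filter, filter_notMem_filter_ssubset_powerset hj,
    vol_singleton_right]
  linear_combination key / 4
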